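/- arXiv:1111.4319 — 2 statements merged into one kernel-verified Lean document; each statement's English description precedes it below -/
import Mathlib

section
/- Let q be a prime power and let 1 ≤ r ≤ k ≤ n be integers. Then 𝒞_q(n,k,r) · [k,r]_q ≥ [n,r]_q, and equality 𝒞_q(n,k,r) · [k,r]_q = [n,r]_q holds if and only if there exists a Steiner structure S_q(r,k,n). -/
open Module

/-- `coveringNumber F n k r` is the minimum number of `k`-dimensional `F`-linear subspaces
of `F^n` needed so that every `r`-dimensional subspace is contained in at least one of them. -/
noncomputable def coveringNumber (F : Type) [Field F] (n k r : ℕ) : ℕ :=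
  sInf { m : ℕ | ∃ S : Finset (Submodule F (Fin n → F)),
    S.card = m ∧
    (∀ X ∈ S, finrank F X = k) ∧
    (∀ Y : Submodule F (Fin n → F), finrank F Y = r → ∃ X ∈ S, Y ≤ X) }


/-- The Gaussian binomial coefficient `[n, k]_q`, as a rational number. -/
noncomputable def gaussBinom (q n k : ℕ) : ℚ :=
  ∏ i ∈ Finset.range k, (((q : ℚ) ^ (n - i) - 1) / ((q : ℚ) ^ (k - i) - 1))

/-!
Double counting the incidences `Y ≤ X` between the `r`-dimensional subspaces `Y` of `F^n` and
the blocks `X` of a covering `S` by `k`-dimensional subspaces: every `Y` lies in at least one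
block and every block contains `[k, r]_q` of the `[n, r]_q` subspaces `Y`, so
`[n, r]_q ≤ |S| [k, r]_q`, with equality exactly when every `Y` lies in exactly one block.

The number of `r`-dimensional subspaces of a `d`-dimensional space is obtained by counting
linearly independent `r`-tuples: there are `∏_{i<r} (q^d - q^i)` of them, and each
`r`-dimensional subspace is spanned by exactly `∏_{i<r} (q^r - q^i)` of them.
-/

open Submodule Finset

theorem Submodule.exists_le_finrank_eq {K V : Type*} [DivisionRing K] [AddCommGroup V]
    [Module K V] [Module.Finite K V] (Y : Submodule K V) {k : ℕ} (hYk : finrank K Y ≤ k)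
    (hk : k ≤ finrank K V) : ∃ X : Submodule K V, Y ≤ X ∧ finrank K X = k := by
  induction k, hYk using Nat.le_induction with
  | base => exact ⟨Y, le_rfl, rfl⟩
  | succ k _ ih =>
    obtain ⟨X, hYX, hX⟩ := ih (by omega)
    have hX_ne_top : X ≠ ⊤ := by
      rintro rfl
      rw [finrank_top] at hX
      omega
    obtain ⟨v, -, hv⟩ := SetLike.exists_of_lt (lt_top_iff_ne_top.2 hX_ne_top)
    exact ⟨X ⊔ span K {v}, hYX.trans le_sup_left, by rw [finrank_sup_span_singleton hv, hX]⟩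

theorem gaussBinom_nonneg {q : ℕ} (hq : 1 ≤ q) (d r : ℕ) : 0 ≤ gaussBinom q d r := by
  have hq' : (1 : ℚ) ≤ q := by exact_mod_cast hq
  exact prod_nonneg fun i _ =>
    div_nonneg (sub_nonneg.2 (one_le_pow₀ hq')) (sub_nonneg.2 (one_le_pow₀ hq'))

theorem gaussBinom_mul_prod {q : ℕ} (hq : 1 < q) {d r : ℕ} (hrd : r ≤ d) :
    gaussBinom q d r * ((∏ i ∈ range r, (q ^ r - q ^ i) : ℕ) : ℚ) =
      ((∏ i ∈ range r, (q ^ d - q ^ i) : ℕ) : ℚ) := by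
  rw [gaussBinom, Nat.cast_prod, Nat.cast_prod, ← prod_mul_distrib]
  refine prod_congr rfl fun i hi => ?_
  have hir : i < r := mem_range.1 hi
  have factor (e : ℕ) (he : i ≤ e) : ((q ^ e - q ^ i : ℕ) : ℚ) = q ^ i * (q ^ (e - i) - 1) := by
    rw [Nat.cast_sub (Nat.pow_le_pow_right hq.le he), mul_sub, mul_one, ← pow_add,
      Nat.add_sub_cancel' he, Nat.cast_pow, Nat.cast_pow]
  have hne : (q : ℚ) ^ (r - i) - 1 ≠ 0 :=
    sub_ne_zero.2 (one_lt_pow₀ (by exact_mod_cast hq) (by omega)).ne'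
  rw [factor r hir.le, factor d (by omega)]
  field_simp

section DoubleCounting

variable {α β : Type*} (R : α → β → Prop) [∀ a b, Decidable (R a b)] {s : Finset α}
  {t : Finset β}

theorem Finset.one_le_card_bipartiteAbove {a : α} (h : ∃ b ∈ t, R a b) :
    1 ≤ #(t.bipartiteAbove R a) :=
  let ⟨b, hb, hab⟩ := h
  card_pos.2 ⟨b, mem_filter.2 ⟨hb, hab⟩⟩

theorem Finset.card_le_sum_card_bipartiteAbove (h : ∀ a ∈ s, ∃ b ∈ t, R a b) :
    #s ≤ ∑ a ∈ s, #(t.bipartiteAbove R a) :=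
  card_eq_sum_ones s ▸ sum_le_sum fun a ha => one_le_card_bipartiteAbove R (h a ha)

theorem Finset.card_eq_sum_card_bipartiteAbove_iff (h : ∀ a ∈ s, ∃ b ∈ t, R a b) :
    #s = ∑ a ∈ s, #(t.bipartiteAbove R a) ↔ ∀ a ∈ s, ∃! b, b ∈ t ∧ R a b := by
  rw [card_eq_sum_ones, sum_eq_sum_iff_of_le fun a ha => one_le_card_bipartiteAbove R (h a ha)]
  refine forall₂_congr fun a _ => ?_
  rw [eq_comm, card_eq_one_iff_existsUnique]
  simp only [bipartiteAbove, mem_filter]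

end DoubleCounting

section Counting

variable {K V : Type*} [DivisionRing K] [Fintype K] [AddCommGroup V] [Module K V] [Finite V]

local notation "q" => Fintype.card K

def linearIndependentSpan {r : ℕ} (s : {s : Fin r → V // LinearIndependent K s}) :
    {W : Submodule K V // finrank K W = r} :=
  ⟨span K (Set.range s.1), by rw [finrank_span_eq_card s.2, Fintype.card_fin]⟩

def linearIndependentSpanFiberEquiv {r : ℕ} (W : {W : Submodule K V // finrank K W = r}) :
    {s // linearIndependentSpan s = W} ≃ {t : Fin r → W.1 // LinearIndependent K t} where
  toFun s := ⟨fun i => ⟨s.1.1 i, congrArg Subtype.val s.2 ▸ subset_span ⟨i, rfl⟩⟩,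
    .of_comp W.1.subtype s.1.2⟩
  invFun t := ⟨⟨W.1.subtype ∘ t.1, t.2.map' _ (ker_subtype _)⟩, by
    have : Module.Finite K W.1 := .of_finite
    refine Subtype.ext (show span K (Set.range (W.1.subtype ∘ t.1)) = W.1 from ?_)
    rw [Set.range_comp, ← map_span, t.2.span_eq_top_of_card_eq_finrank' (by simp [W.2]),
      map_subtype_top]⟩
  left_inv _ := rfl
  right_inv _ := rfl

theorem natCard_finrank_eq_mul_prod {r : ℕ} (hr : r ≤ finrank K V) :
    Nat.card {W : Submodule K V // finrank K W = r} * ∏ i ∈ range r, (q ^ r - q ^ i) =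
      ∏ i ∈ range r, (q ^ finrank K V - q ^ i) := by
  have : Fintype {W : Submodule K V // finrank K W = r} := .ofFinite _
  have hfiber (W : {W : Submodule K V // finrank K W = r}) :
      Nat.card {s // linearIndependentSpan s = W} = ∏ i ∈ range r, (q ^ r - q ^ i) := by
    rw [Nat.card_congr (linearIndependentSpanFiberEquiv W), card_linearIndependent W.2.ge, W.2,
      Fin.prod_univ_eq_prod_range (fun i => q ^ r - q ^ i)]
  rw [← Fin.prod_univ_eq_prod_range (fun i => q ^ finrank K V - q ^ i),
    ← card_linearIndependent hr, ← Nat.card_congr (Equiv.sigmaFiberEquiv linearIndependentSpan),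
    Nat.card_sigma]
  simp only [hfiber, sum_const, card_univ, smul_eq_mul, Nat.card_eq_fintype_card]

theorem natCard_finrank_eq_gaussBinom {r : ℕ} (hr : r ≤ finrank K V) :
    (Nat.card {W : Submodule K V // finrank K W = r} : ℚ) = gaussBinom q (finrank K V) r := by
  have hq : 1 < q := Fintype.one_lt_card
  have hpos : 0 < ∏ i ∈ range r, (q ^ r - q ^ i) :=
    prod_pos fun i hi => Nat.sub_pos_of_lt (Nat.pow_lt_pow_right hq (mem_range.1 hi))
  refine mul_right_cancel₀ (Nat.cast_ne_zero.2 hpos.ne') ?_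
  rw [gaussBinom_mul_prod hq hr, ← Nat.cast_mul, natCard_finrank_eq_mul_prod hr]

theorem natCard_finrank_eq_and_le_eq_gaussBinom (X : Submodule K V) {r : ℕ}
    (hr : r ≤ finrank K X) :
    (Nat.card {Y : Submodule K V // finrank K Y = r ∧ Y ≤ X} : ℚ) =
      gaussBinom q (finrank K X) r := by
  have e : {W : Submodule K X // finrank K W = r} ≃ {Y : {Y // Y ≤ X} // finrank K Y.1 = r} :=
    (MapSubtype.orderIso X).toEquiv.subtypeEquiv fun W => by
      rw [← finrank_map_subtype_eq X W]
      rfl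
  rw [← natCard_finrank_eq_gaussBinom hr, Nat.card_congr e,
    Nat.card_congr (Equiv.subtypeSubtypeEquivSubtypeInter (· ≤ X) (finrank K · = r)),
    Nat.card_congr (Equiv.subtypeEquivRight fun _ => and_comm)]

theorem card_filter_finrank_eq_gaussBinom [Fintype (Submodule K V)] {r : ℕ}
    (hr : r ≤ finrank K V) :
    (#(univ.filter fun Y : Submodule K V => finrank K Y = r) : ℚ) =
      gaussBinom q (finrank K V) r := by
  rw [← Fintype.card_subtype, ← Nat.card_eq_fintype_card, natCard_finrank_eq_gaussBinom hr]

end Counting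

def IsSubspaceCovering {K V : Type*} [DivisionRing K] [AddCommGroup V] [Module K V]
    (S : Finset (Submodule K V)) (k r : ℕ) : Prop :=
  (∀ X ∈ S, finrank K X = k) ∧ ∀ Y : Submodule K V, finrank K Y = r → ∃ X ∈ S, Y ≤ X

section Covering

variable {K V : Type*} [DivisionRing K] [AddCommGroup V] [Module K V] [Finite V]

theorem exists_isSubspaceCovering {k r : ℕ} (hrk : r ≤ k) (hk : k ≤ finrank K V) :
    ∃ S : Finset (Submodule K V), IsSubspaceCovering S k r := by
  have : Module.Finite K V := .of_finite
  refine ⟨(Set.toFinite {X : Submodule K V | finrank K X = k}).toFinset,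
    fun X hX => by simpa using hX, fun Y hY => ?_⟩
  obtain ⟨X, hYX, hX⟩ := Y.exists_le_finrank_eq (hY.trans_le hrk) hk
  exact ⟨X, by simpa using hX, hYX⟩

variable [Fintype K]

local notation "q" => Fintype.card K

theorem sum_card_bipartiteAbove_le_eq_card_mul [Fintype (Submodule K V)]
    [DecidableRel (α := Submodule K V) (· ≤ ·)] {S : Finset (Submodule K V)} {k r : ℕ}
    (hS : ∀ X ∈ S, finrank K X = k) (hrk : r ≤ k) :
    (∑ Y ∈ univ.filter fun Y : Submodule K V => finrank K Y = r,
      #(S.bipartiteAbove (· ≤ ·) Y) : ℚ) = #S * gaussBinom q k r := by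
  rw [← Nat.cast_sum, sum_card_bipartiteAbove_eq_sum_card_bipartiteBelow, Nat.cast_sum,
    ← nsmul_eq_mul, ← sum_const]
  refine sum_congr rfl fun X hX => ?_
  rw [bipartiteBelow, filter_filter, ← Fintype.card_subtype, ← Nat.card_eq_fintype_card,
    ← hS X hX, natCard_finrank_eq_and_le_eq_gaussBinom X (hS X hX ▸ hrk)]

namespace IsSubspaceCovering

variable {S : Finset (Submodule K V)} {k r : ℕ}

theorem gaussBinom_le_card_mul (hS : IsSubspaceCovering S k r) (hrk : r ≤ k)
    (hr : r ≤ finrank K V) : gaussBinom q (finrank K V) r ≤ #S * gaussBinom q k r := by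
  classical
  have := Fintype.ofFinite (Submodule K V)
  rw [← card_filter_finrank_eq_gaussBinom hr, ← sum_card_bipartiteAbove_le_eq_card_mul hS.1 hrk]
  exact_mod_cast card_le_sum_card_bipartiteAbove _ fun Y hY => hS.2 Y (mem_filter.1 hY).2

theorem card_mul_gaussBinom_eq_iff (hS : IsSubspaceCovering S k r) (hrk : r ≤ k)
    (hr : r ≤ finrank K V) :
    #S * gaussBinom q k r = gaussBinom q (finrank K V) r ↔
      ∀ Y : Submodule K V, finrank K Y = r → ∃! X, X ∈ S ∧ Y ≤ X := by
  classical
  have := Fintype.ofFinite (Submodule K V)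
  rw [← card_filter_finrank_eq_gaussBinom hr, ← sum_card_bipartiteAbove_le_eq_card_mul hS.1 hrk,
    eq_comm, ← Nat.cast_sum, Nat.cast_inj,
    card_eq_sum_card_bipartiteAbove_iff _ fun Y hY => hS.2 Y (mem_filter.1 hY).2]
  simp only [mem_filter, mem_univ, true_and]

end IsSubspaceCovering

end Covering

theorem exists_card_eq_coveringNumber (F : Type) [Field F] [Finite F] {n k r : ℕ} (hrk : r ≤ k)
    (hkn : k ≤ n) : ∃ S : Finset (Submodule F (Fin n → F)),
      #S = coveringNumber F n k r ∧ IsSubspaceCovering S k r :=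
  let ⟨S, hS⟩ := exists_isSubspaceCovering (V := Fin n → F) hrk (by rwa [finrank_fin_fun])
  Nat.sInf_mem (s := {m | ∃ S, #S = m ∧ IsSubspaceCovering S k r}) ⟨#S, S, rfl, hS⟩

theorem coveringNumber_le_card {F : Type} [Field F] {n k r : ℕ}
    {S : Finset (Submodule F (Fin n → F))} (hS : IsSubspaceCovering S k r) :
    coveringNumber F n k r ≤ #S :=
  Nat.sInf_le ⟨S, rfl, hS⟩

theorem covering_bound_general (q n k r : ℕ)
    (hrk : r ≤ k) (hkn : k ≤ n)
    (F : Type) [Field F] [Fintype F] (hF : Fintype.card F = q) :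
    (coveringNumber F n k r : ℚ) * gaussBinom q k r ≥ gaussBinom q n r ∧
    ((coveringNumber F n k r : ℚ) * gaussBinom q k r = gaussBinom q n r ↔
      ∃ S : Finset (Submodule F (Fin n → F)),
        (∀ X ∈ S, finrank F X = k) ∧
        (∀ Y : Submodule F (Fin n → F), finrank F Y = r →
          ∃! X, X ∈ S ∧ Y ≤ X)) := by
  subst hF
  have hdim : finrank F (Fin n → F) = n := finrank_fin_fun F
  have hrn : r ≤ finrank F (Fin n → F) := by rw [hdim]; omega
  obtain ⟨S₀, hS₀card, hS₀⟩ := exists_card_eq_coveringNumber F hrk hkn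
  have hbound := hS₀.gaussBinom_le_card_mul hrk hrn
  rw [hdim, hS₀card] at hbound
  refine ⟨hbound, fun heq => ⟨S₀, hS₀.1, ?_⟩, ?_⟩
  · exact (hS₀.card_mul_gaussBinom_eq_iff hrk hrn).1 (by rw [hS₀card, hdim, heq])
  · rintro ⟨S, hSk, hSteiner⟩
    have hS : IsSubspaceCovering S k r :=
      ⟨hSk, fun Y hY => let ⟨X, hX, _⟩ := hSteiner Y hY; ⟨X, hX⟩⟩
    have hexact := (hS.card_mul_gaussBinom_eq_iff hrk hrn).2 hSteiner
    rw [hdim] at hexact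
    refine le_antisymm ?_ hbound
    calc (coveringNumber F n k r : ℚ) * gaussBinom (Fintype.card F) k r
        ≤ #S * gaussBinom (Fintype.card F) k r := by
          gcongr
          · exact gaussBinom_nonneg Fintype.card_pos _ _
          · exact coveringNumber_le_card hS
      _ = gaussBinom (Fintype.card F) n r := hexact

/-- The covering bound, with equality iff a Steiner structure exists. -/
theorem covering_bound (q n k r : ℕ) (hq : IsPrimePow q)
    (hr : 1 ≤ r) (hrk : r ≤ k) (hkn : k ≤ n)
    (F : Type) [Field F] [Fintype F] (hF : Fintype.card F = q) :
    (coveringNumber F n k r : ℚ) * gaussBinom q k r ≥ gaussBinom q n r ∧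
    ((coveringNumber F n k r : ℚ) * gaussBinom q k r = gaussBinom q n r ↔
      ∃ S : Finset (Submodule F (Fin n → F)),
        (∀ X ∈ S, finrank F X = k) ∧
        (∀ Y : Submodule F (Fin n → F), finrank F Y = r →
          ∃! X, X ∈ S ∧ Y ≤ X)) :=
  covering_bound_general q n k r hrk hkn F hF
end

section
/- Let n and k be integers with k ≥ 2 and n ≥ 2k. Suppose S is a q-covering design C_2(n−k+1, k, 2) (a finite set of k-dimensional subspaces of F_2^{n−k+1} covering all 2-dimensional subspaces), U is an (n−k)-dimensional subspace of F_2^{n−k+1}, and c is the number of elements X ∈ S with X ⊆ U. Then 𝒞_2(n, k, 2) ≤ 2^{2(n−k)} + (2^k−1)·|S| − (2^k−2)·c. -/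
open Module

/-!
Split `F₂ⁿ = A × B` with `A = F₂ᵏ`, `B = F₂ⁿ⁻ᵏ`. A plane `Y` meeting `0 × B` trivially projects
onto a plane of `A`, hence lies in the graph of one of the `2^(2(n-k))` maps
`v ↦ ψ (α ι v + β (ι v)²)` (the lifted MRD code), where `ι : A ↪ 𝔽_{2^(n-k)}` and
`ψ : 𝔽_{2^(n-k)} ≃ B`: for independent `a₀, a₁` the system `α ι aᵢ + β (ι aᵢ)² = ψ⁻¹ bᵢ` is
solvable. Otherwise the projection of `Y` to `A` is at most a line, so `Y ≤ ⟨x⟩ × B` for some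
`x ≠ 0`. Identifying `F₂ⁿ⁻ᵏ⁺¹` with `⟨x⟩ × B` so that `U` goes to `0 × B`, some member of `S`
maps onto a subspace containing `Y`. The images of the members of `S` inside `U` do not depend on
`x`, which saves `(2ᵏ - 2) c` subspaces.
-/

open Submodule

section CoveringDesign

variable {K V V' : Type*} [Field K] [AddCommGroup V] [Module K V] [AddCommGroup V'] [Module K V']

def IsCoveringDesign (S : Finset (Submodule K V)) (k r : ℕ) : Prop :=
  (∀ X ∈ S, finrank K X = k) ∧ ∀ Y : Submodule K V, finrank K Y = r → ∃ X ∈ S, Y ≤ X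

theorem IsCoveringDesign.image_map [DecidableEq (Submodule K V')] {S : Finset (Submodule K V)}
    {k r : ℕ} (hS : IsCoveringDesign S k r) (e : V ≃ₗ[K] V') :
    IsCoveringDesign (S.image (map (e : V →ₗ[K] V'))) k r := by
  refine ⟨Finset.forall_mem_image.mpr fun X hX => (e.finrank_map_eq X).trans (hS.1 X hX),
    fun Y hY => ?_⟩
  obtain ⟨X, hX, hYX⟩ := hS.2 (Y.map (e.symm : V' →ₗ[K] V)) ((e.symm.finrank_map_eq Y).trans hY)
  refine ⟨X.map (e : V →ₗ[K] V'), Finset.mem_image_of_mem _ hX, ?_⟩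
  simpa [map_le_iff_le_comap, ← map_equiv_eq_comap_symm] using hYX

end CoveringDesign

theorem coveringNumber_le_card_of_linearEquiv {K : Type} {V : Type*} [Field K] [AddCommGroup V]
    [Module K V] {n k r : ℕ} {S : Finset (Submodule K V)} (hS : IsCoveringDesign S k r)
    (e : V ≃ₗ[K] (Fin n → K)) : coveringNumber K n k r ≤ S.card := by
  classical
  have hT := hS.image_map e
  exact le_trans (Nat.sInf_le ⟨_, rfl, hT.1, hT.2⟩) Finset.card_image_le

section Interpolation

variable {K A B : Type*} [Field K] [AddCommGroup A] [Module K A] [AddCommGroup B] [Module K B]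

def IsInterpolating (ℱ : Finset (A →ₗ[K] B)) (r : ℕ) : Prop :=
  ∀ a : Fin r → A, LinearIndependent K a → ∀ b : Fin r → B, ∃ f ∈ ℱ, ∀ i, f (a i) = b i

theorem finrank_graph (f : A →ₗ[K] B) : finrank K f.graph = finrank K A := by
  rw [LinearMap.graph_eq_range_prod,
    LinearMap.finrank_range_of_inj fun _ _ h => congrArg Prod.fst h]

theorem exists_le_graph_of_disjoint [FiniteDimensional K A] [FiniteDimensional K B]
    {ℱ : Finset (A →ₗ[K] B)} {r : ℕ} (hℱ : IsInterpolating ℱ r) {Y : Submodule K (A × B)}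
    (hY : finrank K Y = r) (hdisj : Disjoint Y (LinearMap.ker (LinearMap.fst K A B))) :
    ∃ f ∈ ℱ, Y ≤ f.graph := by
  let b := finBasisOfFinrankEq K Y hY
  have hind : LinearIndependent K ((LinearMap.fst K A B).domRestrict Y ∘ b) :=
    b.linearIndependent.map' _
      (LinearMap.ker_eq_bot.mpr (LinearMap.injective_domRestrict_iff.mpr hdisj))
  obtain ⟨f, hf, hfb⟩ := hℱ _ hind fun i => (b i : A × B).2
  have hY : (LinearMap.snd K A B).domRestrict Y = (f ∘ₗ LinearMap.fst K A B).domRestrict Y :=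
    b.ext fun i => (hfb i).symm
  exact ⟨f, hf, fun y hy => LinearMap.congr_fun hY ⟨y, hy⟩⟩

end Interpolation

/-- Cramer's rule; the determinant is `t₁ t₂ (t₂ - t₁)`. -/
theorem exists_mul_add_mul_sq_eq {L : Type*} [Field L] {t₁ t₂ : L} (h₁ : t₁ ≠ 0) (h₂ : t₂ ≠ 0)
    (h : t₁ ≠ t₂) (q₁ q₂ : L) :
    ∃ α β : L, α * t₁ + β * t₁ ^ 2 = q₁ ∧ α * t₂ + β * t₂ ^ 2 = q₂ := by
  have hdet : t₁ * t₂ * (t₂ - t₁) ≠ 0 := mul_ne_zero (mul_ne_zero h₁ h₂) (sub_ne_zero.mpr h.symm)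
  refine ⟨(q₁ * t₂ ^ 2 - q₂ * t₁ ^ 2) / (t₁ * t₂ * (t₂ - t₁)),
    (t₁ * q₂ - t₂ * q₁) / (t₁ * t₂ * (t₂ - t₁)), ?_, ?_⟩ <;> field_simp <;> ring

theorem exists_isInterpolating_two {A B : Type*} [AddCommGroup A] [Module (ZMod 2) A]
    [AddCommGroup B] [Module (ZMod 2) B] [FiniteDimensional (ZMod 2) A]
    [FiniteDimensional (ZMod 2) B] (hAB : finrank (ZMod 2) A ≤ finrank (ZMod 2) B) :
    ∃ ℱ : Finset (A →ₗ[ZMod 2] B), ℱ.card ≤ Nat.card B ^ 2 ∧ IsInterpolating ℱ 2 := by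
  classical
  set m := finrank (ZMod 2) B
  obtain hm | hm := Nat.eq_zero_or_pos m
  · have : Subsingleton A := finrank_zero_iff (R := ZMod 2).mp (by omega)
    exact ⟨∅, by simp, fun a ha => absurd (Subsingleton.elim _ _) (ha.ne_zero 0)⟩
  let L := GaloisField 2 m
  have : Fintype L := Fintype.ofFinite L
  have hL : finrank (ZMod 2) L = m := GaloisField.finrank 2 hm.ne'
  obtain ⟨ι, hι⟩ := finrank_le_iff_exists_linearMap.mp (hAB.trans hL.ge)
  let ψ : L ≃ₗ[ZMod 2] B := LinearEquiv.ofFinrankEq _ _ hL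
  let frob : L →ₗ[ZMod 2] L := (frobenius L 2 : L →+* L).toAddMonoidHom.toZModLinearMap 2
  let code : L × L → (A →ₗ[ZMod 2] B) := fun p =>
    (ψ : L →ₗ[ZMod 2] B) ∘ₗ
      (LinearMap.mulLeft (ZMod 2) p.1 ∘ₗ ι + LinearMap.mulLeft (ZMod 2) p.2 ∘ₗ frob ∘ₗ ι)
  refine ⟨Finset.univ.image code, ?_, fun a ha b => ?_⟩
  · refine Finset.card_image_le.trans ?_
    rw [Finset.card_univ, Fintype.card_prod, ← Nat.card_eq_fintype_card, Nat.card_congr ψ.toEquiv,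
      sq]
  have ht i : ι (a i) ≠ 0 := (map_ne_zero_iff ι hι).mpr (ha.ne_zero i)
  obtain ⟨α, β, h₀, h₁⟩ := exists_mul_add_mul_sq_eq (ht 0) (ht 1)
    (hι.ne (ha.injective.ne zero_ne_one)) (ψ.symm (b 0)) (ψ.symm (b 1))
  refine ⟨code (α, β), Finset.mem_image_of_mem _ (Finset.mem_univ _), fun i => ?_⟩
  fin_cases i <;> simp [code, frob, frobenius_def, h₀, h₁]

theorem Submodule.exists_linearEquiv_prod_fst_eq_zero_iff {K W B : Type*} [Field K]
    [AddCommGroup W] [Module K W] [AddCommGroup B] [Module K B] [FiniteDimensional K W]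
    [FiniteDimensional K B] (U : Submodule K W) (hUW : finrank K U + 1 = finrank K W)
    (hUB : finrank K U = finrank K B) :
    ∃ σ : W ≃ₗ[K] K × B, ∀ w, w ∈ U ↔ (σ w).1 = 0 := by
  obtain ⟨C, hC⟩ := U.exists_isCompl
  have hC1 : finrank K C = finrank K K := by
    have := finrank_add_eq_of_isCompl hC
    rw [finrank_self]
    omega
  refine ⟨(prodEquivOfIsCompl C U hC.symm).symm ≪≫ₗ
    (LinearEquiv.ofFinrankEq _ _ hC1).prodCongr (LinearEquiv.ofFinrankEq _ _ hUB), fun w => ?_⟩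
  rw [LinearEquiv.trans_apply, LinearEquiv.prodCongr_apply, LinearEquiv.map_eq_zero_iff,
    prodEquivOfIsCompl_symm_apply_fst_eq_zero]

section Lift

variable {K A B W : Type*} [Field K] [AddCommGroup A] [Module K A] [AddCommGroup B] [Module K B]
  [AddCommGroup W] [Module K W] (σ : W ≃ₗ[K] K × B)

def liftAlong (x : A) : W →ₗ[K] A × B :=
  (LinearMap.toSpanSingleton K A x).prodMap LinearMap.id ∘ₗ (σ : W →ₗ[K] K × B)

theorem range_liftAlong (x : A) : LinearMap.range (liftAlong σ x) = (K ∙ x).prod ⊤ := by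
  rw [liftAlong, LinearMap.range_comp_of_range_eq_top _ σ.range, LinearMap.range_prodMap,
    LinearMap.range_toSpanSingleton, LinearMap.range_id]

theorem liftAlong_injective {x : A} (hx : x ≠ 0) : Function.Injective (liftAlong σ x) :=
  ((smul_left_injective K hx).prodMap Function.injective_id).comp σ.injective

theorem map_liftAlong_eq_of_fst_eq_zero {X : Submodule K W} (hX : ∀ w ∈ X, (σ w).1 = 0)
    (x x' : A) : X.map (liftAlong σ x) = X.map (liftAlong σ x') := by
  rw [← LinearMap.range_domRestrict, ← LinearMap.range_domRestrict]
  congr 1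
  ext ⟨w, hw⟩ <;> simp [liftAlong, hX w hw]

end Lift

theorem Submodule.exists_le_span_singleton_of_finrank_le_one {K V : Type*} [Field K]
    [AddCommGroup V] [Module K V] [Nontrivial V] {P : Submodule K V} [FiniteDimensional K P]
    (hP : finrank K P ≤ 1) : ∃ x ≠ 0, P ≤ K ∙ x := by
  obtain ⟨⟨v, rfl⟩⟩ := (finrank_le_one_iff_isPrincipal P).mp hP
  obtain rfl | hv := eq_or_ne v 0
  · obtain ⟨x, hx⟩ := exists_ne (0 : V)
    exact ⟨x, hx, by simp⟩
  · exact ⟨v, hv, le_rfl⟩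

theorem exists_le_span_prod_top_of_not_disjoint {K A B : Type*} [Field K] [AddCommGroup A]
    [Module K A] [AddCommGroup B] [Module K B] [Nontrivial A] [FiniteDimensional K A]
    [FiniteDimensional K B] {Y : Submodule K (A × B)} (hY : finrank K Y ≤ 2)
    (h : ¬Disjoint Y (LinearMap.ker (LinearMap.fst K A B))) :
    ∃ x ≠ 0, Y ≤ (K ∙ x).prod ⊤ := by
  have hrk := LinearMap.finrank_range_add_finrank_ker ((LinearMap.fst K A B).domRestrict Y)
  rw [LinearMap.range_domRestrict] at hrk
  have hker : finrank K (LinearMap.ker ((LinearMap.fst K A B).domRestrict Y)) ≠ 0 := by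
    rwa [Ne, Submodule.finrank_eq_zero, LinearMap.ker_eq_bot,
      LinearMap.injective_domRestrict_iff]
  obtain ⟨x, hx, hYx⟩ :=
    exists_le_span_singleton_of_finrank_le_one (P := Y.map (LinearMap.fst K A B)) (by omega)
  exact ⟨x, hx, (le_prod_iff ..).mpr ⟨hYx, le_top⟩⟩

section Construction

variable {K A B W : Type*} [Field K] [AddCommGroup A] [Module K A] [AddCommGroup B] [Module K B]
  [AddCommGroup W] [Module K W] [Fintype A]

open scoped Classical in
/-- A member of `S` inside `U` has the same image under every `liftAlong σ x`, so it is lifted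
only once, along `x₀`. -/
noncomputable def recursiveCovering (σ : W ≃ₗ[K] K × B) (U : Submodule K W) (x₀ : A)
    (ℱ : Finset (A →ₗ[K] B)) (S : Finset (Submodule K W)) : Finset (Submodule K (A × B)) :=
  ℱ.image LinearMap.graph ∪
    ((Finset.univ.erase 0 ×ˢ {X ∈ S | ¬X ≤ U}).image fun p => p.2.map (liftAlong σ p.1)) ∪
    {X ∈ S | X ≤ U}.image fun X => X.map (liftAlong σ x₀)

variable (σ : W ≃ₗ[K] K × B) {U : Submodule K W} {x₀ : A} {ℱ : Finset (A →ₗ[K] B)}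
  {S : Finset (Submodule K W)}

theorem finrank_of_mem_recursiveCovering (hx₀ : x₀ ≠ 0)
    (hS : ∀ X ∈ S, finrank K X = finrank K A) :
    ∀ Y ∈ recursiveCovering σ U x₀ ℱ S, finrank K Y = finrank K A := by
  have hlift {x : A} (hx : x ≠ 0) {X} (hX : X ∈ S) :
      finrank K (X.map (liftAlong σ x)) = finrank K A :=
    (equivMapOfInjective _ (liftAlong_injective σ hx) X).finrank_eq.symm.trans (hS X hX)
  simp only [recursiveCovering, Finset.mem_union, Finset.mem_image, Finset.mem_product,
    Finset.mem_erase, Finset.mem_filter]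
  rintro Y ((⟨f, -, rfl⟩ | ⟨⟨x, X⟩, ⟨⟨hx, -⟩, hX, -⟩, rfl⟩) | ⟨X, ⟨hX, -⟩, rfl⟩)
  · exact finrank_graph f
  · exact hlift hx hX
  · exact hlift hx₀ hX

theorem isCoveringDesign_recursiveCovering [FiniteDimensional K A] [FiniteDimensional K B]
    (hσ : ∀ w, w ∈ U ↔ (σ w).1 = 0) (hx₀ : x₀ ≠ 0) (hℱ : IsInterpolating ℱ 2)
    (hS : IsCoveringDesign S (finrank K A) 2) :
    IsCoveringDesign (recursiveCovering σ U x₀ ℱ S) (finrank K A) 2 := by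
  classical
  refine ⟨finrank_of_mem_recursiveCovering σ hx₀ hS.1, fun Y hY => ?_⟩
  by_cases hdisj : Disjoint Y (LinearMap.ker (LinearMap.fst K A B))
  · obtain ⟨f, hf, hYf⟩ := exists_le_graph_of_disjoint hℱ hY hdisj
    exact ⟨f.graph,
      Finset.mem_union_left _ (Finset.mem_union_left _ (Finset.mem_image_of_mem _ hf)), hYf⟩
  have : Nontrivial A := ⟨⟨x₀, 0, hx₀⟩⟩
  obtain ⟨x, hx, hYx⟩ := exists_le_span_prod_top_of_not_disjoint hY.le hdisj
  set Y' := Y.comap (liftAlong σ x)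
  have hY' : Y'.map (liftAlong σ x) = Y := map_comap_eq_self (by rwa [range_liftAlong])
  obtain ⟨X, hXS, hY'X⟩ := hS.2 Y' <| by
    rw [(equivMapOfInjective _ (liftAlong_injective σ hx) Y').finrank_eq, hY', hY]
  have hYX : Y ≤ X.map (liftAlong σ x) := hY' ▸ map_mono hY'X
  simp only [recursiveCovering, Finset.mem_union, Finset.mem_image, Finset.mem_product,
    Finset.mem_erase, Finset.mem_filter, Finset.mem_univ, Prod.exists]
  by_cases hXU : X ≤ U
  · rw [map_liftAlong_eq_of_fst_eq_zero σ (fun w hw => (hσ w).mp (hXU hw)) x x₀] at hYX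
    exact ⟨_, Or.inr ⟨X, ⟨hXS, hXU⟩, rfl⟩, hYX⟩
  · exact ⟨_, Or.inl (Or.inr ⟨x, X, ⟨⟨hx, trivial⟩, hXS, hXU⟩, rfl⟩), hYX⟩

open scoped Classical in
theorem card_recursiveCovering_le (U : Submodule K W) (x₀ : A) (ℱ : Finset (A →ₗ[K] B))
    (S : Finset (Submodule K W)) :
    (recursiveCovering σ U x₀ ℱ S).card ≤
      ℱ.card + (Fintype.card A - 1) * {X ∈ S | ¬X ≤ U}.card + {X ∈ S | X ≤ U}.card := by
  refine (Finset.card_union_le _ _).trans (add_le_add ((Finset.card_union_le _ _).trans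
    (add_le_add Finset.card_image_le (Finset.card_image_le.trans ?_))) Finset.card_image_le)
  rw [Finset.card_product, Finset.card_erase_of_mem (Finset.mem_univ _), Finset.card_univ]

end Construction

/-- The improved recursive construction from a lifted MRD code, for $r = 2$. -/
theorem improved_CMRD (n k : ℕ) (hk : 2 ≤ k) (hn : 2 * k ≤ n)
    (S : Finset (Submodule (ZMod 2) (Fin (n - k + 1) → ZMod 2)))
    (hdim : ∀ X ∈ S, finrank (ZMod 2) X = k)
    (hcov : ∀ Y : Submodule (ZMod 2) (Fin (n - k + 1) → ZMod 2),
      finrank (ZMod 2) Y = 2 → ∃ X ∈ S, Y ≤ X)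
    (U : Submodule (ZMod 2) (Fin (n - k + 1) → ZMod 2))
    (hU : finrank (ZMod 2) U = n - k)
    (c : ℕ)
    (hc : c = {X : Submodule (ZMod 2) (Fin (n - k + 1) → ZMod 2) | X ∈ S ∧ X ≤ U}.ncard) :
    (coveringNumber (ZMod 2) n k 2 : ℤ) ≤
      2 ^ (2 * (n - k)) + (2 ^ k - 1) * S.card - (2 ^ k - 2) * c := by
  classical
  obtain ⟨σ, hσ⟩ := U.exists_linearEquiv_prod_fst_eq_zero_iff (B := Fin (n - k) → ZMod 2)
    (by simp [hU]) (by simp [hU])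
  obtain ⟨ℱ, hℱcard, hℱ⟩ := exists_isInterpolating_two (A := Fin k → ZMod 2)
    (B := Fin (n - k) → ZMod 2) (by simp; omega)
  have : Nonempty (Fin k) := ⟨⟨0, by omega⟩⟩
  obtain ⟨x₀, hx₀⟩ := exists_ne (0 : Fin k → ZMod 2)
  have hS : IsCoveringDesign S (finrank (ZMod 2) (Fin k → ZMod 2)) 2 := ⟨by simpa using hdim, hcov⟩
  let e : ((Fin k → ZMod 2) × (Fin (n - k) → ZMod 2)) ≃ₗ[ZMod 2] (Fin n → ZMod 2) :=
    LinearEquiv.ofFinrankEq _ _ (by simp; omega)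
  have hle := (coveringNumber_le_card_of_linearEquiv
    (isCoveringDesign_recursiveCovering σ hσ hx₀ hℱ hS) e).trans
    (card_recursiveCovering_le σ U x₀ ℱ S)
  have hc' : c = {X ∈ S | X ≤ U}.card := by
    rw [hc, ← Set.ncard_coe_finset, Finset.coe_filter]
  have hsplit := S.card_filter_add_card_filter_not (· ≤ U)
  simp only [Module.finrank_fin_fun, Nat.card_eq_fintype_card, Fintype.card_fun, ZMod.card,
    Fintype.card_fin] at hℱcard hle
  rw [← pow_mul, mul_comm] at hℱcard
  subst hc'
  zify [Nat.one_le_two_pow] at hle hℱcard hsplit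
  rw [← hsplit]
  linarith
end
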